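/- Assume E ≠ 0. Then there exists no vector X ∈ ℝ³ with A_c^ZB·X = u·X + (1, u, 0)ᵀ, and there exists no vector X ∈ ℝ³ with A_c^ZB·X = u·X + (0, 0, 1)ᵀ; i.e., neither of the ordinary eigenvectors (1, u, 0) and (0, 0, 1) of A_c^ZB for the eigenvalue u can be extended to a Jordan chain of length two. -/
import Mathlib


/-- The Zha–Bilgen convection flux Jacobian of the 1-D Euler system. -/
noncomputable def AcZB (u E : ℝ) : Matrix (Fin 3) (Fin 3) ℝ :=
  !![0, 1, 0;
     -u^2, 2*u, 0;
     -u*E, E, u]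

/-- For `E ≠ 0`, neither ordinary eigenvector `(1, u, 0)` nor `(0, 0, 1)` of `A_c^ZB`
(for the eigenvalue `u`) can be extended to a Jordan chain of length two. -/
theorem no_jordan_chain_from_eigenvectors_AcZB (u E : ℝ) (hE : E ≠ 0) :
    (¬ ∃ X : Fin 3 → ℝ, (AcZB u E).mulVec X = u • X + ![1, u, 0]) ∧
    (¬ ∃ X : Fin 3 → ℝ, (AcZB u E).mulVec X = u • X + ![0, 0, 1]) := by
  constructor
  · rintro ⟨X, h⟩
    have h0 := congrFun h 0
    have h2 := congrFun h 2
    simp [AcZB, Matrix.mulVec, dotProduct, Fin.sum_univ_three] at h0 h2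
    exact hE (by linear_combination h2 - E * h0)
  · rintro ⟨X, h⟩
    have h0 := congrFun h 0
    have h2 := congrFun h 2
    simp [AcZB, Matrix.mulVec, dotProduct, Fin.sum_univ_three] at h0 h2
    exact absurd (by linear_combination h2 - E * h0 : (0:ℝ) = 1) (by norm_num)
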